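/- There exist real numbers a ≥ 0 and b, c with 0 < b ≤ c < 1, a sequence (t_n) with t_n ∈ [b, c] for all n, and sequences (x_n), (y_n) of real numbers such that limsup_{n→∞} |x_n| ≤ a, limsup_{n→∞} |y_n| ≤ a, limsup_{n→∞} |t_n x_n + (1 − t_n) y_n| = a, and yet |x_n − y_n| does not tend to 0 as n → ∞. (Since ℝ with the absolute value is a uniformly convex Banach space, the variant of Schu's lemma in which the limit in the third hypothesis is replaced by a limsup is false.) -/

import Mathlib

/-!
Take `x ≡ 1`, `t ≡ 1/2` and `y` alternating `0, 1, 0, 1, …`. The midpoint `(x + y)/2` never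
exceeds `1` and equals `1` at every odd index, so its `limsup` is `1`; but `x - y = 1` at every
even index, so `|x - y|` does not tend to `0`. Schu's hypothesis with `lim` fails here, since the
norm of the midpoint oscillates between `1/2` and `1`.
-/

open Filter Topology

section LimsupBounds

variable {ι α : Type*} {l : Filter ι}

lemma limsup_abs_le_of_forall_abs_le [l.NeBot] {u : ι → ℝ} {a : ℝ} (h : ∀ i, |u i| ≤ a) :
    limsup (fun i => |u i|) l ≤ a :=
  limsup_le_of_le (isCoboundedUnder_le_of_eventually_le l (.of_forall fun i => abs_nonneg (u i)))
    (.of_forall h)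

lemma limsup_eq_of_eventually_le_of_frequently_eq [ConditionallyCompleteLinearOrder α]
    {u : ι → α} {a : α} (hle : ∀ᶠ i in l, u i ≤ a) (hfreq : ∃ᶠ i in l, u i = a) :
    limsup u l = a :=
  have hge : ∃ᶠ i in l, a ≤ u i := hfreq.mono fun _ h => h.ge
  le_antisymm (limsup_le_of_le (IsCobounded.of_frequently_ge hge) hle)
    (le_limsup_of_frequently_le hge ⟨a, hle⟩)

end LimsupBounds

lemma not_tendsto_nhds_of_frequently_eq {ι X : Type*} [TopologicalSpace X] [T1Space X]
    {l : Filter ι} {f : ι → X} {b c : X} (hne : c ≠ b) (h : ∃ᶠ i in l, f i = c) :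
    ¬ Tendsto f l (𝓝 b) := fun hf =>
  have ⟨_, hc, hnc⟩ := (h.and_eventually (hf (compl_singleton_mem_nhds hne.symm))).exists
  hnc hc

lemma Nat.frequently_even_atTop : ∃ᶠ n : ℕ in atTop, Even n :=
  frequently_atTop.2 fun n => ⟨2 * n, by omega, even_two_mul n⟩

lemma Nat.frequently_odd_atTop : ∃ᶠ n : ℕ in atTop, Odd n :=
  frequently_atTop.2 fun n => ⟨2 * n + 1, by omega, odd_two_mul_add_one n⟩

/-- The variant of Schu's lemma in which the `lim` in the third hypothesis is
replaced by `limsup` fails even in `ℝ`. -/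
theorem counterexample_limsup_version :
    ∃ (a b c : ℝ) (t x y : ℕ → ℝ), 0 ≤ a ∧ 0 < b ∧ b ≤ c ∧ c < 1 ∧
      (∀ n, t n ∈ Set.Icc b c) ∧
      Filter.limsup (fun n => |x n|) Filter.atTop ≤ a ∧
      Filter.limsup (fun n => |y n|) Filter.atTop ≤ a ∧
      Filter.limsup (fun n => |t n * x n + (1 - t n) * y n|) Filter.atTop = a ∧
      ¬ Filter.Tendsto (fun n => |x n - y n|) Filter.atTop (nhds 0) := by
  set y : ℕ → ℝ := fun n => if Even n then 0 else 1
  refine ⟨1, 1 / 2, 1 / 2, fun _ => 1 / 2, fun _ => 1, y, zero_le_one, by norm_num, le_rfl,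
    by norm_num, fun _ => ⟨le_rfl, le_rfl⟩, by simp, ?_, ?_, ?_⟩
  · exact limsup_abs_le_of_forall_abs_le fun n => by unfold y; split_ifs <;> norm_num
  · refine limsup_eq_of_eventually_le_of_frequently_eq
      (.of_forall fun n => by unfold y; split_ifs <;> norm_num) ?_
    exact Nat.frequently_odd_atTop.mono fun n hn => by simp [y, Nat.not_even_iff_odd.2 hn]
  · exact not_tendsto_nhds_of_frequently_eq one_ne_zero
      (Nat.frequently_even_atTop.mono fun n hn => by simp [y, hn])
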